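/- Let M be a monoid with identity e, K a field, μ₁,...,μₘ : M → K distinct nonzero multiplicative functions, b₁,...,bₘ ∈ K all nonzero, and J : {1,...,m} → {1,...,n} a surjection. Suppose g, h, h₁,...,hₙ : M → K satisfy g(x)h(y) + Σᵢ₌₁ᵐ bᵢμᵢ(x)h_{J(i)}(y) = 0 for all x, y ∈ M. Then either (i) h = 0 and hⱼ = 0 for every j ∈ {1,...,n}, or (ii) there exist c₁,...,cₙ ∈ K such that g = Σⱼ₌₁ⁿ cⱼ gⱼ and hⱼ = −cⱼ h for all j, where gⱼ := Σ_{i ∈ J⁻¹({j})} bᵢμᵢ. -/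

import Mathlib

/-!
By Dedekind's lemma the distinct nonzero multiplicative functions `μᵢ` are linearly independent,
so for fixed `y` the equation determines the coefficient vector `(bᵢ h_{J(i)}(y))ᵢ` from the
function `x ↦ g(x) h(y)`. If `h(y) = 0` all these coefficients vanish, and since `J` is onto and
`bᵢ ≠ 0` this forces `hⱼ(y) = 0`. Otherwise fix `y₀` with `h(y₀) ≠ 0`: eliminating `g` between
the equations at `y` and `y₀` gives `h(y₀) hⱼ(y) = h(y) hⱼ(y₀)`, i.e. `hⱼ = -cⱼ h` with
`cⱼ = -hⱼ(y₀) / h(y₀)`, and the equation at `y₀` then expresses `g` through the `gⱼ`.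
-/

open Finset

section Multiplicative

variable {M K : Type*} [MulOneClass M] [CommRing K] [IsDomain K]

lemma map_one_of_map_mul {μ : M → K} (hmul : ∀ x y, μ (x * y) = μ x * μ y) (hne : μ ≠ 0) :
    μ 1 = 1 := by
  obtain ⟨x, hx⟩ := Function.ne_iff.mp hne
  exact (mul_eq_left₀ hx).mp (by rw [← hmul, mul_one])

lemma linearIndependent_of_map_mul {ι : Type*} (μ : ι → M → K)
    (hmul : ∀ i, ∀ x y, μ i (x * y) = μ i x * μ i y)
    (hinj : Function.Injective μ) (hne : ∀ i, μ i ≠ 0) :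
    LinearIndependent K μ := by
  let χ : ι → M →* K := fun i =>
    { toFun := μ i, map_one' := map_one_of_map_mul (hmul i) (hne i), map_mul' := hmul i }
  have hχ : Function.Injective χ := fun i j hij => hinj (congrArg DFunLike.coe hij)
  exact (linearIndependent_monoidHom M K).comp χ hχ

end Multiplicative

section Coefficients

variable {M K ι κ : Type*} [CommRing K] [Fintype ι]

lemma eq_zero_of_sum_mul_comp_eq_zero [IsDomain K] {μ : ι → M → K}
    (hli : LinearIndependent K μ) {b : ι → K} (hb : ∀ i, b i ≠ 0) {J : ι → κ} (hJ : Function.Surjective J)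
    {v : κ → K} (hv : ∀ x, ∑ i, b i * μ i x * v (J i) = 0) : v = 0 := by
  have hcoeff : ∀ i, b i * v (J i) = 0 := by
    refine Fintype.linearIndependent_iff.mp hli _ (funext fun x => ?_)
    simpa [Finset.sum_apply, mul_right_comm] using hv x
  funext j
  obtain ⟨i, rfl⟩ := hJ j
  exact (mul_eq_zero.mp (hcoeff i)).resolve_left (hb i)

lemma sum_mul_comp_eq_sum_fiberwise [Fintype κ] [DecidableEq κ] (J : ι → κ) (f : ι → K)
    (c : κ → K) : ∑ i, f i * c (J i) = ∑ j, c j * ∑ i ∈ univ.filter fun i => J i = j, f i := by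
  rw [← sum_fiberwise univ J]
  refine sum_congr rfl fun j _ => ?_
  rw [mul_sum]
  refine sum_congr rfl fun i hi => ?_
  rw [(mem_filter.mp hi).2, mul_comm]

end Coefficients

/-- Solutions of the Levi-Civita equation when `f = 0`: either `h = 0` and all
`hⱼ = 0`, or `g` is a combination of the `gⱼ` and `hⱼ = -cⱼ h`. -/
theorem stmt_8 {M : Type*} [Monoid M] {K : Type*} [Field K] {m n : ℕ}
    (μ : Fin m → M → K)
    (hmul : ∀ i, ∀ x y : M, μ i (x * y) = μ i x * μ i y)
    (hdist : Function.Injective μ) (hne : ∀ i, μ i ≠ 0)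
    (b : Fin m → K) (hb : ∀ i, b i ≠ 0)
    (J : Fin m → Fin n) (hJsurj : Function.Surjective J)
    (g h : M → K) (h' : Fin n → M → K)
    (heq : ∀ x y : M, g x * h y + ∑ i, b i * μ i x * h' (J i) y = 0) :
    (h = 0 ∧ ∀ j, h' j = 0) ∨
    ∃ c : Fin n → K,
      g = (fun x => ∑ j, c j * ∑ i ∈ Finset.univ.filter fun i => J i = j, b i * μ i x) ∧
      ∀ j, h' j = fun y => -(c j * h y) := by
  have hli := linearIndependent_of_map_mul μ hmul hdist hne
  have vanish := fun v => eq_zero_of_sum_mul_comp_eq_zero hli hb hJsurj (v := v)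
  by_cases hh : h = 0
  · refine .inl ⟨hh, fun j => funext fun y => ?_⟩
    have hy := vanish (fun j => h' j y) fun x => by simpa [hh] using heq x y
    exact congrFun hy j
  obtain ⟨y₀, hy₀⟩ : ∃ y, h y ≠ 0 := Function.ne_iff.mp hh
  have proportional : ∀ y, (fun j => h y₀ * h' j y - h y * h' j y₀) = 0 := fun y =>
    vanish _ fun x => by
      simp only [mul_sub, sum_sub_distrib, ← mul_assoc, mul_right_comm _ (h y₀),
        mul_right_comm _ (h y), ← sum_mul]
      linear_combination h y₀ * heq x y - h y * heq x y₀
  refine .inr ⟨fun j => -(h' j y₀ / h y₀), funext fun x => ?_, fun j => funext fun y => ?_⟩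
  · rw [← sum_mul_comp_eq_sum_fiberwise]
    simp only [mul_neg, mul_div_assoc', sum_neg_distrib, ← sum_div]
    field_simp
    linear_combination heq x y₀
  · have hy : h y₀ * h' j y - h y * h' j y₀ = 0 := congrFun (proportional y) j
    field_simp
    linear_combination hy
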